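/- arXiv:2203.10071 — 2 statements merged into one kernel-verified Lean document; each statement's English description precedes it below -/
import Mathlib

section
/- Let G be a graph and H an attachment set of even size h. Then η(altan(G,H)) ≤ η(G) + 2. -/
open scoped Classical

/-- The nullity of a graph: dimension of the kernel of its real adjacency matrix. -/
noncomputable def nullity {V : Type*} [Fintype V] (G : SimpleGraph V) : ℕ :=
  letI := Classical.decEq V
  letI := Classical.decRel G.Adj
  Module.finrank ℝ ↥(LinearMap.ker (Matrix.toLin' (G.adjMatrix ℝ)))

/-- `q` is a kernel eigenvector of `G`: the sum of `q` over each neighbourhood is `0`. -/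
def IsKernelVector {V : Type*} [Fintype V] (G : SimpleGraph V) (q : V → ℝ) : Prop :=
  ∀ v : V, ∑ u : V, (if G.Adj v u then q u else 0) = 0

/-- Underlying relation of the altan construction: vertices are `V ⊕ (Fin h ⊕ Fin h)`,
where `Sum.inr (Sum.inl i)` is `x_{i+1}` and `Sum.inr (Sum.inr i)` is `y_{i+1}`
(0-indexed versions of the 1-indexed `x_i, y_i`). -/
def altanRel {V : Type*} {h : ℕ} [NeZero h] (G : SimpleGraph V) (H : Fin h → V) :
    (V ⊕ (Fin h ⊕ Fin h)) → (V ⊕ (Fin h ⊕ Fin h)) → Prop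
  | Sum.inl u, Sum.inl w => G.Adj u w
  | Sum.inl u, Sum.inr (Sum.inl i) => u = H i
  | Sum.inr (Sum.inl i), Sum.inr (Sum.inr j) => j = i ∨ i = j + 1
  | _, _ => False

/-- The altan of `(G, H)`. -/
def altan {V : Type*} {h : ℕ} [NeZero h] (G : SimpleGraph V) (H : Fin h → V) :
    SimpleGraph (V ⊕ (Fin h ⊕ Fin h)) :=
  SimpleGraph.fromRel (altanRel G H)

/-- The special vector: `s(y_i) = (-1)^i` (1-indexed), `0` elsewhere. -/
def specialVector (V : Type*) (h : ℕ) : (V ⊕ (Fin h ⊕ Fin h)) → ℝ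
  | Sum.inr (Sum.inr j) => (-1 : ℝ) ^ ((j : ℕ) + 1)
  | _ => 0

/-- The induced attachment set `H' = (y_1, ..., y_h)` of the altan. -/
def inducedAttachment (V : Type*) (h : ℕ) : Fin h → (V ⊕ (Fin h ⊕ Fin h)) :=
  fun i => Sum.inr (Sum.inr i)

/-!
Let `q` be a kernel vector of the altan. Its equation at `y_j` reads `q x_j + q x_{j+1} = 0`, so
once `q x_1 = 0` it vanishes on all the `x_i`, and then its equations at the vertices of `G` say
that its restriction to `G` is a kernel vector of `G`. Its equation at `x_i` reads
`q v_i + q y_{i-1} + q y_i = 0`, so if moreover `q` vanishes on `G` and at `y_h`, it vanishes on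
all the `y_i` as well. Hence restriction to `G` embeds the kernel vectors with `q x_1 = q y_h = 0`,
a subspace of codimension at most two, into the kernel of `G`.
-/

open Module

theorem Submodule.finrank_le_finrank_add_finrank_of_injOn {𝕜 M N W : Type*} [Field 𝕜]
    [AddCommGroup M] [Module 𝕜 M] [AddCommGroup N] [Module 𝕜 N] [AddCommGroup W] [Module 𝕜 W]
    [FiniteDimensional 𝕜 M] [FiniteDimensional 𝕜 N] [FiniteDimensional 𝕜 W]
    (K : Submodule 𝕜 M) (L : Submodule 𝕜 W) (π : M →ₗ[𝕜] N) (r : M →ₗ[𝕜] W)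
    (hmaps : ∀ q ∈ K, π q = 0 → r q ∈ L) (hinj : ∀ q ∈ K, π q = 0 → r q = 0 → q = 0) :
    finrank 𝕜 K ≤ finrank 𝕜 L + finrank 𝕜 N := by
  set p := π.domRestrict K
  let ρ : LinearMap.ker p →ₗ[𝕜] L :=
    LinearMap.codRestrict L (r ∘ₗ K.subtype ∘ₗ (LinearMap.ker p).subtype)
      fun q => hmaps _ q.1.2 q.2
  have hρ : Function.Injective ρ := by
    rw [← LinearMap.ker_eq_bot, Submodule.eq_bot_iff]
    intro q hq
    exact Subtype.ext <| Subtype.ext <| hinj _ q.1.2 q.2 (congrArg Subtype.val hq)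
  calc finrank 𝕜 K = finrank 𝕜 (LinearMap.range p) + finrank 𝕜 (LinearMap.ker p) :=
        (LinearMap.finrank_range_add_finrank_ker p).symm
    _ ≤ finrank 𝕜 N + finrank 𝕜 L :=
        add_le_add (Submodule.finrank_le _) (LinearMap.finrank_le_finrank_of_injective hρ)
    _ = finrank 𝕜 L + finrank 𝕜 N := add_comm _ _

open Fin.NatCast in
theorem Fin.cyclic_induction {h : ℕ} [NeZero h] {P : Fin h → Prop} (a : Fin h) (ha : P a)
    (hstep : ∀ i, P i → P (i + 1)) (i : Fin h) : P i := by
  have hP : ∀ n : ℕ, P (a + (n : Fin h)) := fun n => by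
    induction n with
    | zero => simpa using ha
    | succ n ih => simpa [add_assoc] using hstep _ ih
  simpa using hP (i - a).val

theorem Fintype.sum_ite_eq_add_of_iff {α M : Type*} [Fintype α] [DecidableEq α] [AddCommMonoid M]
    {p : α → Prop} [DecidablePred p] {a b : α} (hab : a ≠ b) (hp : ∀ x, p x ↔ x = a ∨ x = b)
    (f : α → M) : ∑ x, (if p x then f x else 0) = f a + f b := by
  rw [← Finset.sum_filter, show ({x | p x} : Finset α) = {a, b} by ext; simp [hp],
    Finset.sum_pair hab]

theorem Fin.self_ne_add_one {h : ℕ} [NeZero h] (hh : 2 ≤ h) (a : Fin h) : a ≠ a + 1 := by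
  intro e
  have := Fin.one_eq_zero_iff.mp (left_eq_add.mp e)
  omega

section Altan

variable {V : Type*} {h : ℕ} [NeZero h] {G : SimpleGraph V} {H : Fin h → V}

@[simp] lemma altan_adj_inl_inl {u v : V} : (altan G H).Adj (.inl u) (.inl v) ↔ G.Adj u v := by
  simp only [altan, SimpleGraph.fromRel_adj, altanRel, ne_eq, Sum.inl.injEq]
  exact ⟨fun hadj => hadj.2.elim id G.adj_symm, fun hadj => ⟨hadj.ne, .inl hadj⟩⟩

@[simp] lemma altan_adj_inl_x {v : V} {i : Fin h} :
    (altan G H).Adj (.inl v) (.inr (.inl i)) ↔ v = H i := by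
  simp [altan, altanRel]

@[simp] lemma altan_adj_x_inl {v : V} {i : Fin h} :
    (altan G H).Adj (.inr (.inl i)) (.inl v) ↔ v = H i := by
  simp [altan, altanRel]

@[simp] lemma altan_adj_x_y {i j : Fin h} :
    (altan G H).Adj (.inr (.inl i)) (.inr (.inr j)) ↔ j = i ∨ i = j + 1 := by
  simp [altan, altanRel]

@[simp] lemma altan_adj_y_x {i j : Fin h} :
    (altan G H).Adj (.inr (.inr j)) (.inr (.inl i)) ↔ j = i ∨ i = j + 1 := by
  simp [altan, altanRel]

@[simp] lemma altan_adj_inl_y {v : V} {j : Fin h} :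
    ¬ (altan G H).Adj (.inl v) (.inr (.inr j)) := by
  simp [altan, altanRel]

@[simp] lemma altan_adj_y_inl {v : V} {j : Fin h} :
    ¬ (altan G H).Adj (.inr (.inr j)) (.inl v) := by
  simp [altan, altanRel]

@[simp] lemma altan_adj_x_x {i i' : Fin h} :
    ¬ (altan G H).Adj (.inr (.inl i)) (.inr (.inl i')) := by
  simp [altan, altanRel]

@[simp] lemma altan_adj_y_y {j j' : Fin h} :
    ¬ (altan G H).Adj (.inr (.inr j)) (.inr (.inr j')) := by
  simp [altan, altanRel]

variable [Fintype V] {q : V ⊕ (Fin h ⊕ Fin h) → ℝ}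

namespace IsKernelVector

lemma altan_inl (hq : IsKernelVector (altan G H) q) (v : V) :
    ∑ u, (if G.Adj v u then q (.inl u) else 0) + ∑ i, (if v = H i then q (.inr (.inl i)) else 0)
      = 0 := by
  simpa [Fintype.sum_sum_type] using hq (.inl v)

lemma altan_x (hh : 2 ≤ h) (hq : IsKernelVector (altan G H) q) (i : Fin h) :
    q (.inl (H i)) + (q (.inr (.inr i)) + q (.inr (.inr (i - 1)))) = 0 := by
  have hi := hq (.inr (.inl i))
  simp only [Fintype.sum_sum_type, altan_adj_x_inl, Finset.sum_ite_eq', Finset.mem_univ,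
    ↓reduceIte, altan_adj_x_x, Finset.sum_const_zero, altan_adj_x_y, zero_add] at hi
  have hne : i ≠ i - 1 := by simpa using (Fin.self_ne_add_one hh (i - 1)).symm
  rwa [Fintype.sum_ite_eq_add_of_iff hne
    fun x => or_congr_right (eq_comm.trans eq_sub_iff_add_eq.symm)] at hi

lemma altan_y (hh : 2 ≤ h) (hq : IsKernelVector (altan G H) q) (j : Fin h) :
    q (.inr (.inl j)) + q (.inr (.inl (j + 1))) = 0 := by
  have hj := hq (.inr (.inr j))
  simp only [Fintype.sum_sum_type, altan_adj_y_inl, ↓reduceIte, Finset.sum_const_zero,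
    altan_adj_y_x, altan_adj_y_y, add_zero, zero_add] at hj
  rwa [Fintype.sum_ite_eq_add_of_iff (Fin.self_ne_add_one hh j) fun x => or_congr_left eq_comm] at hj

lemma altan_x_eq_zero (hh : 2 ≤ h) (hq : IsKernelVector (altan G H) q)
    (hx : q (.inr (.inl 0)) = 0) (i : Fin h) : q (.inr (.inl i)) = 0 :=
  Fin.cyclic_induction (P := fun i => q (.inr (.inl i)) = 0) 0 hx
    (fun j hj => by linarith [hq.altan_y hh j]) i

lemma altan_comp_inl (hh : 2 ≤ h) (hq : IsKernelVector (altan G H) q)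
    (hx : q (.inr (.inl 0)) = 0) : IsKernelVector G (q ∘ Sum.inl) := fun v => by
  simpa [hq.altan_x_eq_zero hh hx] using hq.altan_inl v

lemma altan_eq_zero (hh : 2 ≤ h) (hq : IsKernelVector (altan G H) q)
    (hx : q (.inr (.inl 0)) = 0) (hy : q (.inr (.inr (-1))) = 0) (hV : ∀ v, q (.inl v) = 0) :
    q = 0 := by
  have hy' : ∀ j, q (.inr (.inr j)) = 0 := Fin.cyclic_induction (-1) hy fun j hj => by
    simpa [hV, hj] using hq.altan_x hh (j + 1)
  funext w
  rcases w with v | i | j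
  exacts [hV v, hq.altan_x_eq_zero hh hx i, hy' j]

end IsKernelVector

end Altan

lemma nullity_eq_finrank_ker {V : Type*} [Fintype V] [DecidableEq V] (G : SimpleGraph V)
    [DecidableRel G.Adj] :
    nullity G = finrank ℝ (LinearMap.ker (Matrix.toLin' (G.adjMatrix ℝ))) := by
  unfold nullity
  congr!

lemma mem_ker_toLin'_adjMatrix_iff {V : Type*} [Fintype V] [DecidableEq V] (G : SimpleGraph V)
    [DecidableRel G.Adj] (q : V → ℝ) :
    q ∈ LinearMap.ker (Matrix.toLin' (G.adjMatrix ℝ)) ↔ IsKernelVector G q := by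
  simp [funext_iff, IsKernelVector, SimpleGraph.adjMatrix_mulVec_apply,
    SimpleGraph.neighborFinset_eq_filter, Finset.sum_filter]
  congr!

theorem stmt3_general {V : Type*} [Fintype V] {h : ℕ} [NeZero h] (hh : 2 ≤ h)
    (G : SimpleGraph V) (H : Fin h → V) :
    nullity (altan G H) ≤ nullity G + 2 := by
  rw [nullity_eq_finrank_ker, nullity_eq_finrank_ker]
  simpa using Submodule.finrank_le_finrank_add_finrank_of_injOn
    (LinearMap.ker (Matrix.toLin' ((altan G H).adjMatrix ℝ)))
    (LinearMap.ker (Matrix.toLin' (G.adjMatrix ℝ)))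
    ((LinearMap.proj (R := ℝ) (φ := fun _ => ℝ) (.inr (.inl 0) : V ⊕ (Fin h ⊕ Fin h))).prod
      (LinearMap.proj (.inr (.inr (-1)) : V ⊕ (Fin h ⊕ Fin h))))
    (LinearMap.funLeft ℝ ℝ Sum.inl)
    (fun q hq hπ => (mem_ker_toLin'_adjMatrix_iff _ _).2 <|
      ((mem_ker_toLin'_adjMatrix_iff _ q).1 hq).altan_comp_inl hh (congrArg Prod.fst hπ))
    (fun q hq hπ hr => ((mem_ker_toLin'_adjMatrix_iff _ q).1 hq).altan_eq_zero hh
      (congrArg Prod.fst hπ) (congrArg Prod.snd hπ) (congrFun hr))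

/-- for even attachment size, the nullity of the altan is at most η(G) + 2. -/
theorem stmt3 {V : Type*} [Fintype V] {h : ℕ} [NeZero h] (hh : 2 ≤ h) (heven : Even h)
    (G : SimpleGraph V) (H : Fin h → V) :
    nullity (altan G H) ≤ nullity G + 2 :=
  stmt3_general hh G H
end

section
/- Let G be a graph, H an attachment set of odd size h, and q a kernel eigenvector of G. Then q extends to a kernel eigenvector q̃ of altan(G,H) with q̃|_{V(G)} = q, q̃(x_i) = 0 for all i, and q̃(y_h) = (1/2)·Σ_{i=1}^{h} (-1)^i q(v_i). -/
open scoped Classical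

/-! Extend `q` by `0` on the `x_i` and by unknowns `a_i` on the `y_i`. The kernel conditions at
the vertices of `G` and at the `y_i` then hold automatically, and the one at `x_i` becomes the
cyclic system `a_i + a_{i-1} = c_i := -q(v_i)`. For odd `h` it is solved by
`a_j = ½ Σ_m (-1)^{j-m} c_m`, the exponent read in `{0, …, h-1}`: as `h - 1` is even,
`(-1)^k + (-1)^{k-1} = 2 δ_{k,0}` on `ℤ/h`, and at `j = h - 1` the sign `(-1)^{h-1-m}` is
`(-1)^m`. -/

open Finset

namespace Fin

variable {K : Type*} [Ring K] {n : ℕ}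

lemma neg_one_pow_val_add_neg_one_pow_val_sub_one (hn : Even n) (k : Fin (n + 1)) :
    (-1 : K) ^ (k : ℕ) + (-1) ^ ((k - 1 : Fin (n + 1)) : ℕ) = if k = 0 then 2 else 0 := by
  rw [coe_sub_one]
  split_ifs with hk
  · rw [hk, val_zero, pow_zero, hn.neg_one_pow, one_add_one_eq_two]
  · obtain ⟨j, hj⟩ := Nat.exists_eq_add_one.mpr (Nat.pos_of_ne_zero (val_ne_zero_iff.mpr hk))
    simp [hj, pow_succ]

lemma neg_one_pow_val_neg_one_sub (hn : Even n) (m : Fin (n + 1)) :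
    (-1 : K) ^ ((-1 - m : Fin (n + 1)) : ℕ) = (-1) ^ (m : ℕ) := by
  rw [show (-1 : Fin (n + 1)) = last n from Fin.ext coe_neg_one, last_sub, val_rev,
    neg_one_pow_eq_pow_mod_two, neg_one_pow_eq_pow_mod_two (m : ℕ)]
  have := Nat.even_iff.mp hn
  have := m.isLt
  congr 1
  omega

lemma mk_sub_one_eq_neg_one {h : ℕ} [NeZero h] (hlt : h - 1 < h) :
    (⟨h - 1, hlt⟩ : Fin h) = -1 := by
  obtain ⟨n, rfl⟩ := Nat.exists_eq_add_one.mpr (NeZero.pos h)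
  exact Fin.ext coe_neg_one.symm

end Fin

section OddCycle

variable {K : Type*} [Field K] {h : ℕ} [NeZero h]

def oddCycleSolution (c : Fin h → K) (j : Fin h) : K :=
  2⁻¹ * ∑ m, (-1) ^ ((j - m : Fin h) : ℕ) * c m

lemma oddCycleSolution_add_sub_one [NeZero (2 : K)] (hodd : Odd h) (c : Fin h → K)
    (i : Fin h) :
    oddCycleSolution c i + oddCycleSolution c (i - 1) = c i := by
  obtain ⟨k, rfl⟩ := hodd
  have hsign (m : Fin (2 * k + 1)) :
      ((-1 : K) ^ ((i - m : Fin _) : ℕ) + (-1) ^ ((i - 1 - m : Fin _) : ℕ)) * c m =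
        if i = m then 2 * c i else 0 := by
    rw [sub_right_comm, Fin.neg_one_pow_val_add_neg_one_pow_val_sub_one (even_two_mul k)]
    rcases eq_or_ne i m with rfl | him
    · simp
    · simp [sub_eq_zero, him]
  simp only [oddCycleSolution, ← mul_add, ← sum_add_distrib, ← add_mul, hsign, sum_ite_eq,
    mem_univ, if_true]
  field_simp

lemma oddCycleSolution_neg_one (hodd : Odd h) (c : Fin h → K) :
    oddCycleSolution c (-1) = 2⁻¹ * ∑ m : Fin h, (-1) ^ (m : ℕ) * c m := by
  obtain ⟨k, rfl⟩ := hodd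
  simp only [oddCycleSolution, Fin.neg_one_pow_val_neg_one_sub (even_two_mul k)]

end OddCycle

namespace SimpleGraph

variable {V : Type*} {h : ℕ} [NeZero h] (G : SimpleGraph V) (H : Fin h → V)

@[simp] lemma altan_adj_inl_inl (u w : V) : (altan G H).Adj (.inl u) (.inl w) ↔ G.Adj u w := by
  simp only [altan, fromRel_adj, altanRel, G.adj_comm w u, or_self, ne_eq, Sum.inl.injEq]
  exact and_iff_right_of_imp G.ne_of_adj

@[simp] lemma altan_adj_inr_inl_inl (i : Fin h) (w : V) :
    (altan G H).Adj (.inr (.inl i)) (.inl w) ↔ w = H i := by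
  simp [altan, altanRel]

@[simp] lemma altan_adj_inr_inl_inr_inr (i j : Fin h) :
    (altan G H).Adj (.inr (.inl i)) (.inr (.inr j)) ↔ j = i ∨ j = i - 1 := by
  simp [altan, altanRel, eq_sub_iff_add_eq, eq_comm]

@[simp] lemma altan_not_adj_inl_inr_inr (u : V) (j : Fin h) :
    ¬(altan G H).Adj (.inl u) (.inr (.inr j)) := by
  simp [altan, altanRel]

@[simp] lemma altan_not_adj_inr_inr_inl (j : Fin h) (u : V) :
    ¬(altan G H).Adj (.inr (.inr j)) (.inl u) := by
  simp [altan, altanRel]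

@[simp] lemma altan_not_adj_inr_inr_inr_inr (i j : Fin h) :
    ¬(altan G H).Adj (.inr (.inr i)) (.inr (.inr j)) := by
  simp [altan, altanRel]

lemma isKernelVector_altan [Fintype V] (hh : 2 ≤ h) {q : V → ℝ} (hq : IsKernelVector G q)
    {a : Fin h → ℝ} (ha : ∀ i, a i + a (i - 1) = -q (H i)) :
    IsKernelVector (altan G H) (Sum.elim q (Sum.elim 0 a)) := by
  rintro (u | i | j)
  · simpa [Fintype.sum_sum_type] using hq u
  · have hne : i - 1 ≠ i := by
      simp only [ne_eq, sub_eq_self, Fin.one_eq_zero_iff]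
      omega
    have hpair : univ.filter (fun j => j = i ∨ j = i - 1) = {i, i - 1} := by ext; simp
    simp only [Fintype.sum_sum_type, altan_adj_inr_inl_inl, altan_adj_inr_inl_inr_inr,
      Sum.elim_inl, Sum.elim_inr, Pi.zero_apply, ite_self, sum_const_zero, sum_ite_eq',
      mem_univ, if_true]
    rw [← sum_filter, hpair, sum_pair hne.symm]
    linear_combination ha i
  · simp [Fintype.sum_sum_type]

end SimpleGraph

/-- for odd attachment size, every kernel eigenvector `q` of `G` extends to a
kernel eigenvector of the altan vanishing on all `x_i` and with
`q̃(y_h) = (1/2) Σ (-1)^i q(v_i)`. -/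
theorem stmt10 {V : Type*} [Fintype V] {h : ℕ} [NeZero h] (hh : 2 ≤ h) (hodd : Odd h)
    (G : SimpleGraph V) (H : Fin h → V) (q : V → ℝ)
    (hq : IsKernelVector G q) :
    ∃ q' : (V ⊕ (Fin h ⊕ Fin h)) → ℝ,
      IsKernelVector (altan G H) q' ∧ (∀ u : V, q' (Sum.inl u) = q u) ∧
        (∀ i : Fin h, q' (Sum.inr (Sum.inl i)) = 0) ∧
        q' (Sum.inr (Sum.inr ⟨h - 1, by omega⟩)) =
          (1 / 2 : ℝ) * ∑ i : Fin h, (-1 : ℝ) ^ ((i : ℕ) + 1) * q (H i) := by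
  refine ⟨Sum.elim q (Sum.elim 0 (oddCycleSolution fun i => -q (H i))),
    G.isKernelVector_altan H hh hq (oddCycleSolution_add_sub_one hodd _),
    fun _ => rfl, fun _ => rfl, ?_⟩
  rw [Sum.elim_inr, Sum.elim_inr, Fin.mk_sub_one_eq_neg_one, oddCycleSolution_neg_one hodd,
    one_div, mul_sum, mul_sum]
  refine sum_congr rfl fun m _ => ?_
  ring
end
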